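/- arXiv:1505.03695 — 3 statements merged into one kernel-verified Lean document; each statement's English description precedes it below -/
import Mathlib

section
/- Let R_k^m(t) = P_k^m(t)/P_k^m(1) be the normalized Gegenbauer polynomial, with m ≥ 2. Then |R_k^m(t)| = 1 for t in [-1,1] if and only if t = 1 or t = -1, provided k ≥ 1. -/
open scoped RealInnerProductSpace BigOperators

/-- Gegenbauer polynomial `P_k^m` of degree `k` with parameter `(m-1)/2`,
defined by the standard three-term recurrence. -/
noncomputable def Geg (m : ℕ) : ℕ → ℝ → ℝ
  | 0 => fun _ => 1
  | 1 => fun t => ((m : ℝ) - 1) * t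
  | n + 2 => fun t =>
      ((2 * (n : ℝ) + m + 1) * t * Geg m (n + 1) t
        - ((n : ℝ) + m - 1) * Geg m n t) / ((n : ℝ) + 2)

/-!
Put `t = cos θ` and `α = (m - 1) / 2`. Since
`(1 - 2tx + x²)^(-α) = (1 - e^{iθ}x)^(-α) (1 - e^{-iθ}x)^(-α)`, we get
`P_k^m(cos θ) = ∑_{i+j=k} b_i b_j cos ((i - j) θ)` with `b_j = (α)_j / j! > 0` (proved below
from the three-term recurrence). So `|P_k^m(t)| ≤ P_k^m(1)`, with equality only if all
the cosines equal one common sign `ε = ±1`. For `k ≥ 1` the terms `(k, 0)` and `(k - 1, 1)` give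
`cos (kθ) = cos ((k - 2) θ) = ε`, and their sum `2 cos ((k - 1) θ) cos θ = 2ε` forces
`|cos θ| = 1`.
-/

open Finset Real

noncomputable def risingCoeff (α : ℝ) (j : ℕ) : ℝ :=
  (ascPochhammer ℝ j).eval α / j.factorial

@[simp]
lemma risingCoeff_zero (α : ℝ) : risingCoeff α 0 = 1 := by
  simp [risingCoeff]

@[simp]
lemma risingCoeff_one (α : ℝ) : risingCoeff α 1 = α := by
  simp [risingCoeff]

lemma succ_mul_risingCoeff_succ (α : ℝ) (j : ℕ) :
    ((j : ℝ) + 1) * risingCoeff α (j + 1) = (α + j) * risingCoeff α j := by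
  rw [risingCoeff, risingCoeff, ascPochhammer_succ_eval, Nat.factorial_succ]
  push_cast
  field_simp

lemma risingCoeff_pos {α : ℝ} (hα : 0 < α) (j : ℕ) : 0 < risingCoeff α j :=
  div_pos (ascPochhammer_pos j α hα) (by positivity)

lemma sum_antidiagonal_succ_natCast_fst_mul {R : Type*} [NonAssocSemiring R] (n : ℕ)
    (f : ℕ → ℕ → R) :
    ∑ p ∈ antidiagonal (n + 1), (p.1 : R) * f p.1 p.2
      = ∑ p ∈ antidiagonal n, ((p.1 : R) + 1) * f (p.1 + 1) p.2 := by
  simp [Nat.sum_antidiagonal_succ]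

lemma sum_antidiagonal_succ_natCast_snd_mul {R : Type*} [NonAssocSemiring R] (n : ℕ)
    (f : ℕ → ℕ → R) :
    ∑ p ∈ antidiagonal (n + 1), (p.2 : R) * f p.1 p.2
      = ∑ p ∈ antidiagonal n, ((p.2 : R) + 1) * f p.1 (p.2 + 1) := by
  simp [Nat.sum_antidiagonal_succ']

noncomputable def gegenbauerCosSum (α : ℝ) (n : ℕ) (θ : ℝ) : ℝ :=
  ∑ p ∈ antidiagonal n, risingCoeff α p.1 * risingCoeff α p.2 * cos (((p.1 : ℝ) - p.2) * θ)

section Recurrence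

/- All three terms of the recurrence are brought to sums over `antidiagonal (n + 1)`: a factor
`i` (or `j`) in front of `b_i` (or `b_j`) is traded for an index shift, by
`(j + 1) b_{j+1} = (α + j) b_j`. -/

variable (α θ : ℝ) (n : ℕ)

local notation "b" => risingCoeff α

lemma natCast_add_two_mul_gegenbauerCosSum :
    ((n : ℝ) + 2) * gegenbauerCosSum α (n + 2) θ
      = ∑ p ∈ antidiagonal (n + 1), b p.1 * b p.2 *
          ((α + p.1) * cos (((p.1 : ℝ) + 1 - p.2) * θ)
            + (α + p.2) * cos (((p.1 : ℝ) - (p.2 + 1)) * θ)) := by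
  have hsplit : ((n : ℝ) + 2) * gegenbauerCosSum α (n + 2) θ
      = ∑ p ∈ antidiagonal (n + 2), (p.1 : ℝ) * (b p.1 * b p.2 * cos (((p.1 : ℝ) - p.2) * θ))
        + ∑ p ∈ antidiagonal (n + 2),
            (p.2 : ℝ) * (b p.1 * b p.2 * cos (((p.1 : ℝ) - p.2) * θ)) := by
    rw [gegenbauerCosSum, mul_sum, ← sum_add_distrib]
    refine sum_congr rfl fun p hp => ?_
    have h : (p.1 : ℝ) + p.2 = n + 2 := by exact_mod_cast mem_antidiagonal.1 hp
    linear_combination (-(b p.1 * b p.2 * cos (((p.1 : ℝ) - p.2) * θ))) * h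
  rw [hsplit,
    sum_antidiagonal_succ_natCast_fst_mul (n + 1) fun i j => b i * b j * cos (((i : ℝ) - j) * θ),
    sum_antidiagonal_succ_natCast_snd_mul (n + 1) fun i j => b i * b j * cos (((i : ℝ) - j) * θ),
    ← sum_add_distrib]
  refine sum_congr rfl fun p _ => ?_
  push_cast
  linear_combination
    (b p.2 * cos (((p.1 : ℝ) + 1 - p.2) * θ)) * succ_mul_risingCoeff_succ α p.1
      + (b p.1 * cos (((p.1 : ℝ) - (p.2 + 1)) * θ)) * succ_mul_risingCoeff_succ α p.2

lemma natCast_add_two_mul_mul_gegenbauerCosSum :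
    ((n : ℝ) + 2 * α) * gegenbauerCosSum α n θ
      = ∑ p ∈ antidiagonal (n + 1), b p.1 * b p.2 *
          (p.1 * cos (((p.1 : ℝ) - (p.2 + 1)) * θ) + p.2 * cos (((p.1 : ℝ) + 1 - p.2) * θ)) := by
  have hsplit : ∑ p ∈ antidiagonal (n + 1), b p.1 * b p.2 *
          (p.1 * cos (((p.1 : ℝ) - (p.2 + 1)) * θ) + p.2 * cos (((p.1 : ℝ) + 1 - p.2) * θ))
      = ∑ p ∈ antidiagonal (n + 1),
          (p.1 : ℝ) * (b p.1 * b p.2 * cos (((p.1 : ℝ) - (p.2 + 1)) * θ))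
        + ∑ p ∈ antidiagonal (n + 1),
          (p.2 : ℝ) * (b p.1 * b p.2 * cos (((p.1 : ℝ) + 1 - p.2) * θ)) := by
    rw [← sum_add_distrib]
    exact sum_congr rfl fun p _ => by ring
  rw [hsplit,
    sum_antidiagonal_succ_natCast_fst_mul n fun i j => b i * b j * cos (((i : ℝ) - (j + 1)) * θ),
    sum_antidiagonal_succ_natCast_snd_mul n fun i j => b i * b j * cos (((i : ℝ) + 1 - j) * θ),
    ← sum_add_distrib, gegenbauerCosSum, mul_sum]
  refine sum_congr rfl fun p hp => ?_
  have h : (p.1 : ℝ) + p.2 = n := by exact_mod_cast mem_antidiagonal.1 hp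
  simp only [Nat.cast_add, Nat.cast_one, add_sub_add_right_eq_sub]
  linear_combination
    (-(b p.2 * cos (((p.1 : ℝ) - p.2) * θ))) * succ_mul_risingCoeff_succ α p.1
      - (b p.1 * cos (((p.1 : ℝ) - p.2) * θ)) * succ_mul_risingCoeff_succ α p.2
      - (b p.1 * b p.2 * cos (((p.1 : ℝ) - p.2) * θ)) * h

lemma two_mul_cos_mul_gegenbauerCosSum :
    2 * cos θ * gegenbauerCosSum α n θ
      = ∑ p ∈ antidiagonal n, b p.1 * b p.2 *
          (cos (((p.1 : ℝ) + 1 - p.2) * θ) + cos (((p.1 : ℝ) - (p.2 + 1)) * θ)) := by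
  rw [gegenbauerCosSum, mul_sum]
  refine sum_congr rfl fun p _ => ?_
  rw [show ((p.1 : ℝ) + 1 - p.2) * θ = ((p.1 : ℝ) - p.2) * θ + θ by ring,
    show ((p.1 : ℝ) - (p.2 + 1)) * θ = ((p.1 : ℝ) - p.2) * θ - θ by ring, cos_add, cos_sub]
  ring

theorem gegenbauerCosSum_add_two :
    ((n : ℝ) + 2) * gegenbauerCosSum α (n + 2) θ
      = 2 * ((n : ℝ) + 1 + α) * cos θ * gegenbauerCosSum α (n + 1) θ
        - ((n : ℝ) + 2 * α) * gegenbauerCosSum α n θ := by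
  rw [natCast_add_two_mul_gegenbauerCosSum, natCast_add_two_mul_mul_gegenbauerCosSum,
    show 2 * ((n : ℝ) + 1 + α) * cos θ * gegenbauerCosSum α (n + 1) θ
      = ((n : ℝ) + 1 + α) * (2 * cos θ * gegenbauerCosSum α (n + 1) θ) by ring,
    two_mul_cos_mul_gegenbauerCosSum, mul_sum, ← sum_sub_distrib]
  refine sum_congr rfl fun p hp => ?_
  have h : (p.1 : ℝ) + p.2 = n + 1 := by exact_mod_cast mem_antidiagonal.1 hp
  linear_combination
    (b p.1 * b p.2 * (cos (((p.1 : ℝ) + 1 - p.2) * θ) + cos (((p.1 : ℝ) - (p.2 + 1)) * θ))) * h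

end Recurrence

theorem Geg_neg (m : ℕ) : ∀ (n : ℕ) (t : ℝ), Geg m n (-t) = (-1) ^ n * Geg m n t
  | 0, t => by simp [Geg]
  | 1, t => by simp [Geg]
  | n + 2, t => by
    simp only [Geg, Geg_neg m n t, Geg_neg m (n + 1) t]
    ring

theorem Geg_cos (m n : ℕ) (θ : ℝ) :
    Geg m n (cos θ) = gegenbauerCosSum (((m : ℝ) - 1) / 2) n θ := by
  induction n using Nat.twoStepInduction with
  | zero => simp [Geg, gegenbauerCosSum]
  | one =>
    simp only [Geg, gegenbauerCosSum, Nat.sum_antidiagonal_succ,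
      HasAntidiagonal.antidiagonal_zero, sum_singleton, risingCoeff_zero, risingCoeff_one,
      Nat.cast_zero, Nat.cast_one, zero_add, zero_sub, sub_zero, neg_mul, cos_neg, one_mul]
    ring
  | more n ih₀ ih₁ =>
    simp only [Geg]
    rw [ih₀, ih₁, div_eq_iff (by positivity)]
    linear_combination (-1 : ℝ) * gegenbauerCosSum_add_two (((m : ℝ) - 1) / 2) θ n

theorem Geg_one (m n : ℕ) :
    Geg m n 1 = ∑ p ∈ antidiagonal n,
      risingCoeff (((m : ℝ) - 1) / 2) p.1 * risingCoeff (((m : ℝ) - 1) / 2) p.2 := by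
  simpa [gegenbauerCosSum] using Geg_cos m n 0

lemma natCast_sub_one_div_two_pos {m : ℕ} (hm : 1 < m) : 0 < ((m : ℝ) - 1) / 2 := by
  have : (1 : ℝ) < m := by exact_mod_cast hm
  linarith

theorem Geg_one_pos {m : ℕ} (hm : 1 < m) (n : ℕ) : 0 < Geg m n 1 := by
  have hα := natCast_sub_one_div_two_pos hm
  rw [Geg_one]
  exact sum_pos (fun p _ => mul_pos (risingCoeff_pos hα _) (risingCoeff_pos hα _))
    ⟨(0, n), by simp⟩

lemma forall_eq_one_of_sum_mul_eq_sum {ι R : Type*} [CommRing R] [LinearOrder R]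
    [IsStrictOrderedRing R] {s : Finset ι} {w x : ι → R} (hw : ∀ i ∈ s, 0 < w i)
    (hx : ∀ i ∈ s, x i ≤ 1) (h : ∑ i ∈ s, w i * x i = ∑ i ∈ s, w i) : ∀ i ∈ s, x i = 1 := by
  have hzero : ∑ i ∈ s, w i * (1 - x i) = 0 := by
    simp only [mul_sub, mul_one, sum_sub_distrib, h, sub_self]
  intro i hi
  have hterm := (sum_eq_zero_iff_of_nonneg fun j hj =>
    mul_nonneg (hw j hj).le (sub_nonneg.2 (hx j hj))).1 hzero i hi
  linarith [(mul_eq_zero.1 hterm).resolve_left (hw i hi).ne']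

lemma exists_abs_eq_one_forall_eq_of_abs_sum_mul_eq_sum {ι R : Type*} [CommRing R]
    [LinearOrder R] [IsStrictOrderedRing R] {s : Finset ι} {w x : ι → R}
    (hw : ∀ i ∈ s, 0 < w i) (hx : ∀ i ∈ s, |x i| ≤ 1)
    (h : |∑ i ∈ s, w i * x i| = ∑ i ∈ s, w i) : ∃ ε : R, |ε| = 1 ∧ ∀ i ∈ s, x i = ε := by
  rcases (abs_eq (sum_nonneg fun i hi => (hw i hi).le)).1 h with h | h
  · exact ⟨1, abs_one,
      forall_eq_one_of_sum_mul_eq_sum hw (fun i hi => (abs_le.1 (hx i hi)).2) h⟩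
  · refine ⟨-1, by simp, fun i hi => ?_⟩
    have := forall_eq_one_of_sum_mul_eq_sum (x := fun i => -x i) hw
      (fun i hi => by linarith [(abs_le.1 (hx i hi)).1])
      (by simp [mul_neg, sum_neg_distrib, h]) i hi
    linarith

lemma abs_cos_eq_one_of_cos_add_eq_of_cos_sub_eq {x θ ε : ℝ} (hε : |ε| = 1)
    (h₁ : cos (x + θ) = ε) (h₂ : cos (x - θ) = ε) : |cos θ| = 1 := by
  have h : cos x * cos θ = ε := by linarith [cos_add x θ, cos_sub x θ]
  refine le_antisymm (abs_cos_le_one θ) ?_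
  calc 1 = |cos x| * |cos θ| := by rw [← abs_mul, h, hε]
    _ ≤ 1 * |cos θ| := mul_le_mul_of_nonneg_right (abs_cos_le_one x) (abs_nonneg _)
    _ = |cos θ| := one_mul _

theorem normalized_gegenbauer_abs_eq_one_iff (m k : ℕ) (hm : 2 ≤ m) (hk : 1 ≤ k)
    (t : ℝ) (ht : t ∈ Set.Icc (-1 : ℝ) 1) :
    |Geg m k t / Geg m k 1| = 1 ↔ t = 1 ∨ t = -1 := by
  obtain ⟨k, rfl⟩ : ∃ k', k = k' + 1 := ⟨k - 1, by omega⟩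
  have hpos := Geg_one_pos hm (k + 1)
  constructor
  · intro h
    obtain ⟨θ, rfl⟩ : ∃ θ, cos θ = t := ⟨arccos t, cos_arccos ht.1 ht.2⟩
    rw [abs_div, abs_of_pos hpos, div_eq_one_iff_eq hpos.ne', Geg_cos, Geg_one] at h
    have hα := natCast_sub_one_div_two_pos hm
    obtain ⟨ε, hε, hconst⟩ := exists_abs_eq_one_forall_eq_of_abs_sum_mul_eq_sum
      (fun p _ => mul_pos (risingCoeff_pos hα p.1) (risingCoeff_pos hα p.2))
      (fun p _ => abs_cos_le_one _) h
    have h₁ : cos (k * θ + θ) = ε := by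
      rw [← hconst (k + 1, 0) (by simp)]; congr 1; push_cast; ring
    have h₂ : cos (k * θ - θ) = ε := by
      rw [← hconst (k, 1) (by simp)]; congr 1; push_cast; ring
    exact (abs_eq zero_le_one).1 (abs_cos_eq_one_of_cos_add_eq_of_cos_sub_eq hε h₁ h₂)
  · rintro (rfl | rfl)
    · rw [div_self hpos.ne', abs_one]
    · rw [Geg_neg, mul_div_assoc, div_self hpos.ne', mul_one, abs_pow, abs_neg, abs_one, one_pow]
end

section
/- Let m ≥ 2 be an integer and k a nonnegative integer. Then there exist strictly positive real numbers c(k,m,j), j = 0,1,…,⌊k/2⌋, such that t^k = Σ_{j=0}^{⌊k/2⌋} c(k,m,j) P_{k-2j}^m(t) for all t in [-1,1]. -/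
open scoped RealInnerProductSpace BigOperators

/-! Multiplication by `t` acts on the Gegenbauer polynomials through the three-term recurrence
`t P_n = α_n P_{n+1} + β_n P_{n-1}`, with `α_n > 0` and `β_n > 0` for `n ≥ 1` as soon as `m ≥ 2`.
Applying it to `t^k = Σ_j c_j P_{k-2j}` gives the coefficients of `t^{k+1}`: that of `P_{k+1}` is
`c_0 α_k`, and that of `P_{k+1-2(j+1)}` gets the positive contribution `c_j β_{k-2j}` from lowering the
degree of `P_{k-2j}`, `k - 2j ≥ 1`. Positivity therefore propagates by induction on `k`. -/

open Finset

section ThreeTermRecurrence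

variable {R : Type*} [CommSemiring R] {a b : ℕ → R}

/-- The coefficient of `p (k - 2 * j)` in `x ^ k * p 0` when
`x * p n = a n * p (n + 1) + b n * p (n - 1)` for all `n`. -/
def threeTermPowCoeff (a b : ℕ → R) : ℕ → ℕ → R
  | 0, j => if j = 0 then 1 else 0
  | k + 1, 0 => threeTermPowCoeff a b k 0 * a k
  | k + 1, j + 1 =>
      threeTermPowCoeff a b k (j + 1) * a (k - 2 * (j + 1)) + threeTermPowCoeff a b k j * b (k - 2 * j)

theorem threeTermPowCoeff_eq_zero (hb : b 0 = 0) :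
    ∀ {k j : ℕ}, k / 2 < j → threeTermPowCoeff a b k j = 0
  | 0, j, hj => if_neg (by omega)
  | k + 1, j + 1, hj => by
    rw [threeTermPowCoeff, threeTermPowCoeff_eq_zero hb (by omega), zero_mul, zero_add]
    rcases (show k / 2 < j ∨ k = 2 * j by omega) with hj | rfl
    · rw [threeTermPowCoeff_eq_zero hb hj, zero_mul]
    · rw [Nat.sub_self, hb, mul_zero]

theorem sum_range_threeTermPowCoeff_mul (hb : b 0 = 0) {k n : ℕ} (hn : k / 2 < n) (f : ℕ → R) :
    ∑ j ∈ range n, threeTermPowCoeff a b k j * f j =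
      ∑ j ∈ range (k / 2 + 1), threeTermPowCoeff a b k j * f j :=
  (sum_subset (range_subset_range.mpr hn) fun j _ hj => by
    rw [threeTermPowCoeff_eq_zero hb (by simpa using hj), zero_mul]).symm

theorem mul_sum_threeTermPowCoeff (hb : b 0 = 0) {p : ℕ → R} {x : R}
    (hrec : ∀ n, x * p n = a n * p (n + 1) + b n * p (n - 1)) (k : ℕ) :
    x * ∑ j ∈ range (k / 2 + 1), threeTermPowCoeff a b k j * p (k - 2 * j) =
      ∑ j ∈ range ((k + 1) / 2 + 1), threeTermPowCoeff a b (k + 1) j * p (k + 1 - 2 * j) := by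
  have hsplit : x * ∑ j ∈ range (k / 2 + 1), threeTermPowCoeff a b k j * p (k - 2 * j) =
      ∑ j ∈ range (k / 2 + 1), threeTermPowCoeff a b k j * (a (k - 2 * j) * p (k + 1 - 2 * j)) +
        ∑ j ∈ range (k / 2 + 1),
          threeTermPowCoeff a b k j * (b (k - 2 * j) * p (k + 1 - 2 * (j + 1))) := by
    rw [mul_sum, ← sum_add_distrib]
    refine sum_congr rfl fun j hj => ?_
    have hjk : 2 * j ≤ k := by rw [mem_range] at hj; omega
    rw [mul_left_comm, hrec, show k - 2 * j + 1 = k + 1 - 2 * j by omega,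
      show k - 2 * j - 1 = k + 1 - 2 * (j + 1) by omega, mul_add]
  -- Extend both sides by the vanishing term `j = k / 2 + 1`, then split off `j = 0`.
  rw [hsplit, ← sum_range_threeTermPowCoeff_mul hb (n := k / 2 + 2) (by omega), sum_range_succ']
  conv_rhs => rw [← sum_range_threeTermPowCoeff_mul hb (n := k / 2 + 2) (by omega), sum_range_succ']
  simp only [threeTermPowCoeff, add_mul, sum_add_distrib, Nat.mul_zero, Nat.sub_zero, mul_assoc]
  exact add_right_comm _ _ _

theorem pow_mul_eq_sum_threeTermPowCoeff (hb : b 0 = 0) {p : ℕ → R} {x : R}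
    (hrec : ∀ n, x * p n = a n * p (n + 1) + b n * p (n - 1)) (k : ℕ) :
    x ^ k * p 0 = ∑ j ∈ range (k / 2 + 1), threeTermPowCoeff a b k j * p (k - 2 * j) := by
  induction k with
  | zero => simp [threeTermPowCoeff]
  | succ k ih => rw [pow_succ', mul_assoc, ih, mul_sum_threeTermPowCoeff hb hrec]

theorem threeTermPowCoeff_nonneg [PartialOrder R] [IsOrderedRing R]
    (ha : ∀ n, 0 ≤ a n) (hb : ∀ n, 0 ≤ b n) : ∀ k j, 0 ≤ threeTermPowCoeff a b k j
  | 0, j => by unfold threeTermPowCoeff; split_ifs <;> simp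
  | k + 1, 0 => mul_nonneg (threeTermPowCoeff_nonneg ha hb k 0) (ha k)
  | k + 1, j + 1 => add_nonneg (mul_nonneg (threeTermPowCoeff_nonneg ha hb k _) (ha _))
      (mul_nonneg (threeTermPowCoeff_nonneg ha hb k j) (hb _))

theorem threeTermPowCoeff_pos [PartialOrder R] [IsStrictOrderedRing R]
    (ha : ∀ n, 0 < a n) (hb₀ : b 0 = 0) (hb : ∀ n, 0 < b (n + 1)) :
    ∀ {k j : ℕ}, j ≤ k / 2 → 0 < threeTermPowCoeff a b k j
  | 0, 0, _ => by simp [threeTermPowCoeff]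
  | k + 1, 0, _ => mul_pos (threeTermPowCoeff_pos ha hb₀ hb (Nat.zero_le _)) (ha k)
  | k + 1, j + 1, hj => by
    have hb_nonneg (n : ℕ) : 0 ≤ b n := by
      cases n with
      | zero => exact hb₀.ge
      | succ n => exact (hb n).le
    obtain ⟨n, hn⟩ : ∃ n, k - 2 * j = n + 1 := ⟨k - 2 * j - 1, by omega⟩
    refine add_pos_of_nonneg_of_pos
      (mul_nonneg (threeTermPowCoeff_nonneg (fun n => (ha n).le) hb_nonneg k _) (ha _).le)
      (mul_pos (threeTermPowCoeff_pos ha hb₀ hb (by omega)) ?_)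
    rw [hn]
    exact hb n

end ThreeTermRecurrence

noncomputable def gegUpCoeff (m n : ℕ) : ℝ := ((n : ℝ) + 1) / (2 * n + m - 1)

-- `gegDownCoeff m 0 = 0` kills the term `Geg m (0 - 1)` of `mul_geg`.
noncomputable def gegDownCoeff (m : ℕ) : ℕ → ℝ
  | 0 => 0
  | n + 1 => ((n : ℝ) + m - 1) / (2 * n + m + 1)

theorem gegUpCoeff_pos {m : ℕ} (hm : 2 ≤ m) (n : ℕ) : 0 < gegUpCoeff m n := by
  have : (2 : ℝ) ≤ m := by exact_mod_cast hm
  exact div_pos (by positivity) (by linarith [(n.cast_nonneg : (0 : ℝ) ≤ n)])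

theorem gegDownCoeff_succ_pos {m : ℕ} (hm : 2 ≤ m) (n : ℕ) : 0 < gegDownCoeff m (n + 1) := by
  have : (2 : ℝ) ≤ m := by exact_mod_cast hm
  exact div_pos (by linarith [(n.cast_nonneg : (0 : ℝ) ≤ n)]) (by positivity)

theorem mul_geg {m : ℕ} (hm : m ≠ 1) (t : ℝ) :
    ∀ n, t * Geg m n t = gegUpCoeff m n * Geg m (n + 1) t + gegDownCoeff m n * Geg m (n - 1) t
  | 0 => by
    have : (m : ℝ) - 1 ≠ 0 := sub_ne_zero.mpr (by exact_mod_cast hm)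
    simp only [Geg, gegUpCoeff, gegDownCoeff, CharP.cast_eq_zero, mul_zero, zero_add, one_div,
      zero_mul, add_zero, mul_one]
    field_simp
  | n + 1 => by
    have : (2 * n + m + 1 : ℝ) ≠ 0 := by positivity
    simp only [Geg, gegUpCoeff, gegDownCoeff, Nat.add_sub_cancel]
    push_cast
    rw [show 2 * ((n : ℝ) + 1) + m - 1 = 2 * n + m + 1 by ring, show (n : ℝ) + 1 + 1 = n + 2 by ring]
    field_simp
    ring

theorem monomial_eq_sum_gegenbauer (m k : ℕ) (hm : 2 ≤ m) :
    ∃ c : ℕ → ℝ, (∀ j ≤ k / 2, 0 < c j) ∧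
      ∀ t ∈ Set.Icc (-1 : ℝ) 1,
        t ^ k = ∑ j ∈ Finset.range (k / 2 + 1), c j * Geg m (k - 2 * j) t := by
  refine ⟨threeTermPowCoeff (gegUpCoeff m) (gegDownCoeff m) k,
    fun j hj => threeTermPowCoeff_pos (gegUpCoeff_pos hm) rfl (gegDownCoeff_succ_pos hm) hj,
    fun t _ => ?_⟩
  simpa only [Geg, mul_one] using
    pow_mul_eq_sum_threeTermPowCoeff rfl (mul_geg (by omega : m ≠ 1) t) k
end

section
/- Let K be a real, continuous, isotropic positive definite kernel on S^m × S^M, m, M ≥ 2, with support set J_K, decomposed as J_K^{ij} = J_K ∩ ((i+2Z_+) × (j+2Z_+)) for i,j ∈ {0,1}. If K is strictly positive definite, then for each (i,j) ∈ {0,1}², the set J_K^{ij} contains a sequence (k_r, l_r) with k_r → ∞ and l_r → ∞. -/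
open scoped RealInnerProductSpace BigOperators
open Real

noncomputable def pock (lam : ℝ) : ℕ → ℝ
  | 0 => 1
  | j + 1 => pock lam j * ((lam + j) / (j + 1))

lemma pock_succ (lam : ℝ) (j : ℕ) :
    ((j : ℝ) + 1) * pock lam (j + 1) = (lam + j) * pock lam j := by
  have h : ((j : ℝ) + 1) ≠ 0 := by positivity
  rw [pock]
  field_simp

lemma pock_nonneg {lam : ℝ} (h : 0 ≤ lam) : ∀ j, 0 ≤ pock lam j
  | 0 => by rw [pock]; norm_num
  | j + 1 => by
    rw [pock]
    have h1 := pock_nonneg h j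
    have h2 : (0:ℝ) ≤ (lam + j) / (j + 1) := by positivity
    exact mul_nonneg h1 h2

lemma cos_mul_cos' (x y : ℝ) :
    Real.cos x * Real.cos y = (Real.cos (x + y) + Real.cos (x - y)) / 2 := by
  rw [Real.cos_add, Real.cos_sub]; ring

lemma sin_mul_cos' (x y : ℝ) :
    Real.sin x * Real.cos y = (Real.sin (x + y) + Real.sin (x - y)) / 2 := by
  rw [Real.sin_add, Real.sin_sub]; ring

lemma geg_cos_expand (m : ℕ) : ∀ (k : ℕ) (θ : ℝ),
    Geg m k (Real.cos θ) =
      ∑ j ∈ Finset.range (k + 1),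
        pock (((m:ℝ) - 1) / 2) j * pock (((m:ℝ) - 1) / 2) (k - j) *
          Real.cos (((k : ℝ) - 2 * j) * θ) := by
  intro k
  induction k using Nat.twoStepInduction with
  | zero => intro θ; simp [Geg, pock]
  | one =>
    intro θ
    rw [Geg]
    rw [Finset.sum_range_succ, Finset.sum_range_succ, Finset.sum_range_zero]
    have h0 : pock (((m:ℝ) - 1) / 2) 0 = 1 := by simp [pock]
    have h1 : pock (((m:ℝ) - 1) / 2) 1 = ((m:ℝ) - 1) / 2 := by simp [pock]
    norm_num [h0, h1]
    ring
  | more k IH0 IH1 =>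
    intro θ
    set p : ℕ → ℝ := pock (((m:ℝ) - 1) / 2) with hp
    have hgeg : Geg m (k+2) (Real.cos θ) = ((2*(k:ℝ)+m+1) * Real.cos θ * Geg m (k+1) (Real.cos θ)
        - ((k:ℝ)+m-1) * Geg m k (Real.cos θ)) / ((k:ℝ)+2) := rfl
    rw [hgeg, IH1 θ, IH0 θ]
    have hk2 : ((k:ℝ) + 2) ≠ 0 := by positivity
    rw [div_eq_iff hk2]
    set A : ℕ → ℝ := fun j => Real.cos (((k:ℝ) + 2 - 2 * j) * θ) with hA
    have hs : ((k:ℝ)+2) * p (k+2) = (((m:ℝ)-1)/2 + (k:ℝ) + 1) * p (k+1) := by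
      have h := pock_succ (((m:ℝ) - 1) / 2) (k+1)
      have e : k+1+1 = k+2 := by omega
      rw [e] at h
      push_cast at h
      linear_combination h
    have h0' : p 0 = 1 := by simp [hp, pock]
    have key : ∀ j ∈ Finset.range (k + 3),
        ((if j ≤ k + 1 then ((2*(k:ℝ)+m+1)/2) * (p j * p (k+1-j)) else 0)
          + (if 1 ≤ j then ((2*(k:ℝ)+m+1)/2) * (p (j-1) * p (k+1-(j-1))) else 0)
          - (if 1 ≤ j ∧ j ≤ k + 1 then ((k:ℝ)+m-1) * (p (j-1) * p (k-(j-1))) else 0)) * A j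
        = (p j * p (k+2-j) * A j) * ((k:ℝ)+2) := by
      intro j hj
      rw [Finset.mem_range] at hj
      rcases Nat.eq_zero_or_pos j with h0 | hpos
      · subst h0
        rw [if_pos (by omega : (0:ℕ) ≤ k+1), if_neg (by omega : ¬ (1:ℕ) ≤ 0),
            if_neg (by omega : ¬((1:ℕ) ≤ 0 ∧ (0:ℕ) ≤ k+1))]
        simp only [Nat.sub_zero, h0']
        push_cast
        linear_combination (-(A 0)) * hs
      · rcases Nat.lt_or_ge j (k+2) with hlt | hge
        · have hj1 : j ≤ k + 1 := by omega
          rw [if_pos hj1, if_pos (by omega : 1 ≤ j), if_pos ⟨by omega, hj1⟩]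
          obtain ⟨i, rfl⟩ : ∃ i, j = i + 1 := ⟨j - 1, by omega⟩
          have h1 : ((i:ℝ) + 1) * p (i+1) = (((m:ℝ)-1)/2 + i) * p i := pock_succ _ i
          have h2' := pock_succ (((m:ℝ) - 1) / 2) (k-i)
          have hki : (((k-i:ℕ)):ℝ) = (k:ℝ) - i := by
            rw [Nat.cast_sub (by omega)]
          rw [hki] at h2'
          have hc3 : (i+1) - 1 = i := by omega
          have hc6 : k + 1 - (i + 1) = k - i := by omega
          have hc7 : k + 2 - (i + 1) = k + 1 - i := by omega
          rw [hc3, hc6, hc7]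
          have hc4 : k + 1 - i = (k-i) + 1 := by omega
          rw [hc4]
          have h4 : ((i:ℝ) + 1) ≠ 0 := by positivity
          have h5 : ((k:ℝ) - i + 1) ≠ 0 := by
            have : (i:ℝ) ≤ k := by exact_mod_cast (by omega : i ≤ k)
            intro hcon; linarith
          have e1 : p (i+1) = (((m:ℝ)-1)/2 + i) * p i / ((i:ℝ)+1) := by
            rw [eq_div_iff h4]
            linear_combination h1
          have e2 : p ((k-i)+1) = (((m:ℝ)-1)/2 + ((k:ℝ) - i)) * p (k-i) / ((k:ℝ) - i + 1) := by
            rw [eq_div_iff h5]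
            linear_combination h2'
          rw [e1, e2]
          push_cast
          field_simp
          ring
        · have hj2 : j = k + 2 := by omega
          subst hj2
          rw [if_neg (by omega : ¬ k+2 ≤ k+1), if_pos (by omega : 1 ≤ k+2),
              if_neg (by omega : ¬((1:ℕ) ≤ k+2 ∧ k+2 ≤ k+1))]
          have hc : (k+2) - 1 = k + 1 := by omega
          rw [hc]
          simp only [Nat.sub_self, h0']
          push_cast
          linear_combination (-(A (k+2))) * hs
    have hcos1 : ∀ j : ℕ, Real.cos θ * Real.cos (((↑(k+1):ℝ) - 2*↑j)*θ) = (A j + A (j+1))/2 := by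
      intro j
      rw [cos_mul_cos']
      have e1 : θ + (((↑(k+1):ℝ)) - 2*↑j)*θ = ((k:ℝ)+2-2*(j:ℝ))*θ := by push_cast; ring
      have e2 : θ - (((↑(k+1):ℝ)) - 2*↑j)*θ = -(((k:ℝ)+2-2*((j:ℝ)+1))*θ) := by push_cast; ring
      rw [e1, e2, Real.cos_neg]
      rw [hA]
      push_cast
      ring_nf
    have hL1 : (2*(k:ℝ)+↑m+1) * Real.cos θ *
          (∑ j ∈ Finset.range (k+1+1), p j * p (k+1-j) * Real.cos (((↑(k+1):ℝ) - 2*↑j)*θ))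
        = (∑ j ∈ Finset.range (k+2), (((2*(k:ℝ)+↑m+1)/2) * (p j * p (k+1-j))) * A j)
          + (∑ j ∈ Finset.range (k+2), (((2*(k:ℝ)+↑m+1)/2) * (p j * p (k+1-j))) * A (j+1)) := by
      rw [Finset.mul_sum, ← Finset.sum_add_distrib]
      refine Finset.sum_congr rfl fun j hj => ?_
      linear_combination ((2*(k:ℝ)+↑m+1) * (p j * p (k+1-j))) * hcos1 j
    have hL0 : ((k:ℝ)+↑m-1) * (∑ j ∈ Finset.range (k+1), p j * p (k-j) * Real.cos (((k:ℝ) - 2*↑j)*θ))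
        = ∑ j ∈ Finset.range (k+1), (((k:ℝ)+↑m-1) * (p j * p (k-j))) * A (j+1) := by
      rw [Finset.mul_sum]
      refine Finset.sum_congr rfl fun j hj => ?_
      have e : ((k:ℝ) - 2*(j:ℝ))*θ = ((k:ℝ)+2-2*((j:ℝ)+1))*θ := by ring
      rw [e, hA]
      push_cast
      ring
    have E1 : (∑ j ∈ Finset.range (k+2), (((2*(k:ℝ)+↑m+1)/2) * (p j * p (k+1-j))) * A j)
        = ∑ j ∈ Finset.range (k+3),
            (if j ≤ k + 1 then ((2*(k:ℝ)+m+1)/2) * (p j * p (k+1-j)) else 0) * A j := by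
      rw [Finset.sum_range_succ (n := k+2), if_neg (by omega : ¬ k+2 ≤ k+1), zero_mul, add_zero]
      refine Finset.sum_congr rfl fun j hj => ?_
      rw [Finset.mem_range] at hj
      rw [if_pos (by omega : j ≤ k+1)]
    have E2 : (∑ j ∈ Finset.range (k+2), (((2*(k:ℝ)+↑m+1)/2) * (p j * p (k+1-j))) * A (j+1))
        = ∑ j ∈ Finset.range (k+3),
            (if 1 ≤ j then ((2*(k:ℝ)+m+1)/2) * (p (j-1) * p (k+1-(j-1))) else 0) * A j := by
      rw [Finset.sum_range_succ' (fun j => (if 1 ≤ j then ((2*(k:ℝ)+m+1)/2) * (p (j-1) * p (k+1-(j-1))) else 0) * A j) (k+2)]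
      rw [if_neg (by omega : ¬ (1:ℕ) ≤ 0), zero_mul, add_zero]
      refine Finset.sum_congr rfl fun j hj => ?_
      rw [if_pos (by omega : 1 ≤ j+1)]
      norm_num
    have E3 : (∑ j ∈ Finset.range (k+1), (((k:ℝ)+↑m-1) * (p j * p (k-j))) * A (j+1))
        = ∑ j ∈ Finset.range (k+3),
            (if 1 ≤ j ∧ j ≤ k + 1 then ((k:ℝ)+m-1) * (p (j-1) * p (k-(j-1))) else 0) * A j := by
      rw [Finset.sum_range_succ' (fun j => (if 1 ≤ j ∧ j ≤ k+1 then ((k:ℝ)+m-1) * (p (j-1) * p (k-(j-1))) else 0) * A j) (k+2)]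
      rw [if_neg (by omega : ¬((1:ℕ) ≤ 0 ∧ (0:ℕ) ≤ k+1)), zero_mul, add_zero]
      conv_rhs => rw [Finset.sum_range_succ]
      rw [if_neg (by omega : ¬((1:ℕ) ≤ k+1+1 ∧ k+1+1 ≤ k+1)), zero_mul, add_zero]
      refine Finset.sum_congr rfl fun j hj => ?_
      rw [Finset.mem_range] at hj
      rw [if_pos (by omega : (1:ℕ) ≤ j+1 ∧ j+1 ≤ k+1)]
      norm_num
    rw [hL1, hL0, E1, E2, E3]
    have comb : (∑ j ∈ Finset.range (k+3),
            (if j ≤ k + 1 then ((2*(k:ℝ)+m+1)/2) * (p j * p (k+1-j)) else 0) * A j)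
        + (∑ j ∈ Finset.range (k+3),
            (if 1 ≤ j then ((2*(k:ℝ)+m+1)/2) * (p (j-1) * p (k+1-(j-1))) else 0) * A j)
        - (∑ j ∈ Finset.range (k+3),
            (if 1 ≤ j ∧ j ≤ k + 1 then ((k:ℝ)+m-1) * (p (j-1) * p (k-(j-1))) else 0) * A j)
        = ∑ j ∈ Finset.range (k+3),
            ((if j ≤ k + 1 then ((2*(k:ℝ)+m+1)/2) * (p j * p (k+1-j)) else 0)
              + (if 1 ≤ j then ((2*(k:ℝ)+m+1)/2) * (p (j-1) * p (k+1-(j-1))) else 0)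
              - (if 1 ≤ j ∧ j ≤ k + 1 then ((k:ℝ)+m-1) * (p (j-1) * p (k-(j-1))) else 0)) * A j := by
      rw [← Finset.sum_add_distrib, ← Finset.sum_sub_distrib]
      refine Finset.sum_congr rfl fun j hj => ?_
      ring
    rw [comb, Finset.sum_congr rfl key, ← Finset.sum_mul]
    refine congrArg (· * ((k:ℝ)+2)) ?_
    refine Finset.sum_congr rfl fun j hj => ?_
    rw [hA]
    push_cast
    ring_nf

lemma expsum_zero (L : ℕ) (hL : 0 < L) (t : ℤ) (ht : ¬ ((L:ℤ) ∣ t)) :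
    (∑ μ ∈ Finset.range L, Real.cos (2 * π * t * μ / L)) = 0 ∧
    (∑ μ ∈ Finset.range L, Real.sin (2 * π * t * μ / L)) = 0 := by
  have hLR : ((L:ℝ)) ≠ 0 := by positivity
  have hLC : ((L:ℂ)) ≠ 0 := by exact_mod_cast Nat.cast_ne_zero.mpr hL.ne' 
  set z : ℂ := Complex.exp ((2 * π * t / L : ℝ) * Complex.I) with hz
  have hzL : z ^ L = 1 := by
    rw [hz, ← Complex.exp_nat_mul]
    have : (L:ℂ) * ((2 * π * t / L : ℝ) * Complex.I) = (t:ℂ) * (2 * π * Complex.I) := by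
      push_cast
      field_simp
    rw [this]
    exact_mod_cast Complex.exp_int_mul_two_pi_mul_I t
  have hz1 : z ≠ 1 := by
    rw [hz, Ne, Complex.exp_eq_one_iff]
    rintro ⟨c, hc⟩
    apply ht
    have hπ : (π:ℝ) ≠ 0 := Real.pi_ne_zero
    have hI : Complex.I ≠ 0 := Complex.I_ne_zero
    have hc' : ((2 * π * t / L : ℝ) : ℂ) * Complex.I = ((c:ℂ) * (2 * π)) * Complex.I := by
      rw [hc]; ring
    have hcc : ((2 * π * t / L : ℝ) : ℂ) = (c:ℂ) * (2 * π) := mul_right_cancel₀ hI hc'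
    have h2 : (2 * π * t / L : ℝ) = (c:ℝ) * (2 * π) := by exact_mod_cast hcc
    have h2' : (2*π) * (t:ℝ) = (2*π) * ((c:ℝ) * L) := by
      field_simp at h2
      linear_combination (2*π) * h2
    have h2π : (2*π : ℝ) ≠ 0 := by positivity
    have h3 : (t:ℝ) = (c:ℝ) * L := mul_left_cancel₀ h2π h2'
    have h4 : t = c * (L:ℤ) := by exact_mod_cast h3
    exact ⟨c, h4.trans (mul_comm c (L:ℤ))⟩
  have hgeom : ∑ μ ∈ Finset.range L, z ^ μ = 0 := by
    rw [geom_sum_eq hz1, hzL]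
    simp
  have hterm : ∀ μ : ℕ, z ^ μ = Complex.exp ((2 * π * t * μ / L : ℝ) * Complex.I) := by
    intro μ
    rw [hz, ← Complex.exp_nat_mul]
    congr 1
    push_cast
    ring
  have hre : (∑ μ ∈ Finset.range L, z ^ μ).re = ∑ μ ∈ Finset.range L, Real.cos (2 * π * t * μ / L) := by
    rw [Complex.re_sum]
    refine Finset.sum_congr rfl fun μ _ => ?_
    rw [hterm μ, Complex.exp_ofReal_mul_I_re]
  have him : (∑ μ ∈ Finset.range L, z ^ μ).im = ∑ μ ∈ Finset.range L, Real.sin (2 * π * t * μ / L) := by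
    rw [Complex.im_sum]
    refine Finset.sum_congr rfl fun μ _ => ?_
    rw [hterm μ, Complex.exp_ofReal_mul_I_im]
  constructor
  · rw [← hre, hgeom]; rfl
  · rw [← him, hgeom]; rfl

lemma dsum_zero (L s : ℕ) (hL : 0 < L) (q : ℤ)
    (h1 : ¬ ((L:ℤ) ∣ (q + s))) (h2 : ¬ ((L:ℤ) ∣ (q - s))) :
    (∑ μ ∈ Finset.range L, Real.cos (2*π*s*μ/L) * Real.cos ((q:ℝ) * (2*π*μ/L))) = 0 ∧
    (∑ μ ∈ Finset.range L, Real.cos (2*π*s*μ/L) * Real.sin ((q:ℝ) * (2*π*μ/L))) = 0 := by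
  obtain ⟨hc1, hs1⟩ := expsum_zero L hL (q + s) h1
  obtain ⟨hc2, hs2⟩ := expsum_zero L hL (q - s) h2
  push_cast at hc1 hs1 hc2 hs2
  constructor
  · have he : ∀ μ ∈ Finset.range L, Real.cos (2*π*s*μ/L) * Real.cos ((q:ℝ) * (2*π*μ/L))
        = (Real.cos (2*π*((q:ℝ)+s)*μ/L) + Real.cos (2*π*((q:ℝ)-s)*μ/L))/2 := by
      intro μ _
      rw [mul_comm, cos_mul_cos']
      congr 2
      · ring
      · ring
    rw [Finset.sum_congr rfl he, ← Finset.sum_div, Finset.sum_add_distrib, hc1, hc2]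
    norm_num
  · have he : ∀ μ ∈ Finset.range L, Real.cos (2*π*s*μ/L) * Real.sin ((q:ℝ) * (2*π*μ/L))
        = (Real.sin (2*π*((q:ℝ)+s)*μ/L) + Real.sin (2*π*((q:ℝ)-s)*μ/L))/2 := by
      intro μ _
      rw [mul_comm, sin_mul_cos']
      congr 2
      · ring
      · ring
    rw [Finset.sum_congr rfl he, ← Finset.sum_div, Finset.sum_add_distrib, hs1, hs2]
    norm_num

lemma Fsum_zero (m s k L : ℕ) (hLs : L = 2*s + 2)
    (hcond : k % 2 ≠ s % 2 ∨ k < s) :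
    ∑ μ ∈ Finset.range L, ∑ ν ∈ Finset.range L,
      (Real.cos (2*π*s*μ/L) * Real.cos (2*π*s*ν/L)) *
        Geg m k (Real.cos (2*π*μ/L - 2*π*ν/L)) = 0 := by
  have hL : 0 < L := by omega
  have hLZ : (0:ℤ) < (L:ℤ) := by exact_mod_cast hL
  have hLc : (L:ℤ) = 2*(s:ℤ) + 2 := by exact_mod_cast hLs
  have notdvd : ∀ t : ℤ, 0 < t → t < (L:ℤ) → ¬ ((L:ℤ) ∣ t) := by
    rintro t h0 h1 ⟨c, hc⟩
    rcases le_or_gt c 0 with h | h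
    · have hle : (L:ℤ) * c ≤ 0 := mul_nonpos_of_nonneg_of_nonpos (by positivity) h
      omega
    · have hge : (L:ℤ) ≤ (L:ℤ) * c := le_mul_of_one_le_right (by positivity) h
      omega
  have hEven : ∀ t : ℤ, ¬ ((2:ℤ) ∣ t) → ¬ ((L:ℤ) ∣ t) := by
    rintro t hodd ⟨c, hc⟩
    exact hodd ⟨((s:ℤ)+1)*c, by rw [hc, hLc]; ring⟩
  have key : ∀ j : ℕ, j ≤ k →
      ¬ ((L:ℤ) ∣ ((k:ℤ) - 2*j + s)) ∧ ¬ ((L:ℤ) ∣ ((k:ℤ) - 2*j - s)) := by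
    intro j hj
    rcases hcond with hpar | hlt
    · constructor
      · apply hEven
        rintro ⟨c, hc⟩
        omega
      · apply hEven
        rintro ⟨c, hc⟩
        omega
    · constructor
      · exact notdvd _ (by omega) (by omega)
      · intro hd
        exact notdvd (-((k:ℤ) - 2*j - s)) (by omega) (by omega) (dvd_neg.mpr hd)
  refine Finset.sum_eq_zero fun μ _ => ?_
  have inner0 : ∑ ν ∈ Finset.range L,
      Real.cos (2*π*s*ν/L) * Geg m k (Real.cos (2*π*μ/L - 2*π*ν/L)) = 0 := by
    have hexp : ∀ ν ∈ Finset.range L, Real.cos (2*π*s*ν/L) * Geg m k (Real.cos (2*π*μ/L - 2*π*ν/L))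
        = ∑ j ∈ Finset.range (k+1),
            Real.cos (2*π*s*ν/L) * (pock (((m:ℝ) - 1) / 2) j * pock (((m:ℝ) - 1) / 2) (k - j) *
              Real.cos (((k : ℝ) - 2*j) * (2*π*μ/L - 2*π*ν/L))) := by
      intro ν _
      rw [geg_cos_expand m k (2*π*μ/L - 2*π*ν/L), Finset.mul_sum]
    rw [Finset.sum_congr rfl hexp, Finset.sum_comm]
    refine Finset.sum_eq_zero fun j hj => ?_
    rw [Finset.mem_range] at hj
    obtain ⟨hd1, hd2⟩ := dsum_zero L s hL ((k:ℤ) - 2*j) (key j (by omega)).1 (key j (by omega)).2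
    have hqc : (((k:ℤ) - 2*j : ℤ):ℝ) = (k:ℝ) - 2*j := by push_cast; ring
    rw [hqc] at hd1 hd2
    set P : ℝ := pock (((m:ℝ) - 1) / 2) j * pock (((m:ℝ) - 1) / 2) (k - j) with hP
    have hsplit : ∀ ν ∈ Finset.range L,
        Real.cos (2*π*s*ν/L) * (P * Real.cos (((k : ℝ) - 2*j) * (2*π*μ/L - 2*π*ν/L)))
        = P * (Real.cos (((k:ℝ) - 2*j) * (2*π*μ/L)) *
                (Real.cos (2*π*s*ν/L) * Real.cos (((k:ℝ) - 2*j) * (2*π*ν/L)))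
            + Real.sin (((k:ℝ) - 2*j) * (2*π*μ/L)) *
                (Real.cos (2*π*s*ν/L) * Real.sin (((k:ℝ) - 2*j) * (2*π*ν/L)))) := by
      intro ν _
      rw [show ((k : ℝ) - 2*j) * (2*π*μ/L - 2*π*ν/L)
            = ((k:ℝ) - 2*j) * (2*π*μ/L) - ((k:ℝ) - 2*j) * (2*π*ν/L) by ring, Real.cos_sub]
      ring
    rw [Finset.sum_congr rfl hsplit, ← Finset.mul_sum, Finset.sum_add_distrib,
        ← Finset.mul_sum, ← Finset.mul_sum, hd1, hd2]
    ring
  calc ∑ ν ∈ Finset.range L, (Real.cos (2*π*s*μ/L) * Real.cos (2*π*s*ν/L)) *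
        Geg m k (Real.cos (2*π*μ/L - 2*π*ν/L))
      = Real.cos (2*π*s*μ/L) * ∑ ν ∈ Finset.range L, Real.cos (2*π*s*ν/L) *
          Geg m k (Real.cos (2*π*μ/L - 2*π*ν/L)) := by
        rw [Finset.mul_sum]
        exact Finset.sum_congr rfl fun ν _ => by ring
    _ = 0 := by rw [inner0, mul_zero]


/-- The unit sphere `S^d` in `ℝ^(d+1)`. -/
abbrev Sph (d : ℕ) := Metric.sphere (0 : EuclideanSpace ℝ (Fin (d + 1))) 1

/-- Inner product of two points of `S^d`. -/
noncomputable def ip {d : ℕ} (x y : Sph d) : ℝ :=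
  inner ℝ (x : EuclideanSpace ℝ (Fin (d + 1))) (y : EuclideanSpace ℝ (Fin (d + 1)))

noncomputable def circ (d : ℕ) (θ : ℝ) : EuclideanSpace ℝ (Fin (d+1)) :=
  Real.cos θ • EuclideanSpace.single 0 (1:ℝ) + Real.sin θ • EuclideanSpace.single 1 (1:ℝ)

lemma fin_ne (d : ℕ) (hd : 1 ≤ d) : (0 : Fin (d+1)) ≠ 1 := by
  intro h
  have h0 : ((0 : Fin (d+1)) : ℕ) = 0 := rfl
  have h1 : ((1 : Fin (d+1)) : ℕ) = 1 := by
    rw [Fin.val_one']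
    exact Nat.mod_eq_of_lt (by omega)
  rw [Fin.ext_iff, h0, h1] at h
  omega

lemma circ_inner (d : ℕ) (hd : 1 ≤ d) (α β : ℝ) :
    (inner ℝ (circ d α) (circ d β) : ℝ) = Real.cos (α - β) := by
  have hne := fin_ne d hd
  simp only [circ, inner_add_left, inner_add_right, real_inner_smul_left,
    real_inner_smul_right, EuclideanSpace.inner_single_left, EuclideanSpace.single_apply]
  rw [if_neg hne, if_neg (Ne.symm hne)]
  simp [Real.cos_sub]
  ring

lemma circ_norm (d : ℕ) (hd : 1 ≤ d) (θ : ℝ) : ‖circ d θ‖ = 1 := by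
  have h := circ_inner d hd θ θ
  rw [sub_self, Real.cos_zero, real_inner_self_eq_norm_sq] at h
  have h0 : (0:ℝ) ≤ ‖circ d θ‖ := norm_nonneg _
  nlinarith

noncomputable def sphPt (d : ℕ) (hd : 1 ≤ d) (θ : ℝ) : Sph d :=
  ⟨circ d θ, by rw [mem_sphere_zero_iff_norm]; exact circ_norm d hd θ⟩

lemma ip_sphPt (d : ℕ) (hd : 1 ≤ d) (α β : ℝ) :
    ip (sphPt d hd α) (sphPt d hd β) = Real.cos (α - β) := circ_inner d hd α β

lemma sphPt_inj (d : ℕ) (hd : 1 ≤ d) (L : ℕ) (hL0 : 0 < L) {μ ν : ℕ}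
    (hμ : μ < L) (hν : ν < L)
    (h : sphPt d hd (2*π*μ/L) = sphPt d hd (2*π*ν/L)) : μ = ν := by
  have h1 : Real.cos (2*π*μ/L - 2*π*ν/L) = 1 := by
    have e : ip (sphPt d hd (2*π*μ/L)) (sphPt d hd (2*π*ν/L))
        = ip (sphPt d hd (2*π*ν/L)) (sphPt d hd (2*π*ν/L)) := by rw [h]
    rw [ip_sphPt, ip_sphPt, sub_self, Real.cos_zero] at e
    exact e
  rw [Real.cos_eq_one_iff] at h1
  obtain ⟨n, hn⟩ := h1
  have hLR : ((L:ℝ)) ≠ 0 := by positivity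
  have hπ : (0:ℝ) < π := Real.pi_pos
  have h2 : (2*π) * ((μ:ℝ) - ν) = (2*π) * ((n:ℝ) * L) := by
    field_simp at hn
    linear_combination (-(2*π)) * hn
  have h3 : (μ:ℝ) - ν = (n:ℝ) * L := mul_left_cancel₀ (by positivity) h2
  have h4 : (μ:ℤ) - ν = n * L := by exact_mod_cast h3
  have hLZ : (0:ℤ) < (L:ℤ) := by exact_mod_cast hL0
  rcases lt_trichotomy n 0 with hc | hc | hc
  · have : n * (L:ℤ) ≤ -L := by nlinarith
    omega
  · rw [hc, zero_mul] at h4; omega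
  · have : (L:ℤ) ≤ n * L := by nlinarith
    omega



/-- The isotropic part `K_r(t,s) = Σ_{k,l} a_{k,l} P_k^m(t) P_l^M(s)`. -/
noncomputable def Kr (m M : ℕ) (a : ℕ → ℕ → ℝ) (t s : ℝ) : ℝ :=
  ∑' kl : ℕ × ℕ, a kl.1 kl.2 * Geg m kl.1 t * Geg M kl.2 s

noncomputable def dd (s L : ℕ) (μ : ℕ) : ℝ := Real.cos (2*π*s*μ/L)

lemma Fsum_zero' (m s k L : ℕ) (hLs : L = 2*s + 2)
    (hcond : k % 2 ≠ s % 2 ∨ k < s) :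
    ∑ μ ∈ Finset.range L, ∑ ν ∈ Finset.range L,
      dd s L μ * dd s L ν * Geg m k (Real.cos (2*π*μ/L - 2*π*ν/L)) = 0 := by
  simp only [dd]
  exact Fsum_zero m s k L hLs hcond

lemma geg_one_eq (m k : ℕ) : Geg m k 1 =
    ∑ j ∈ Finset.range (k+1), pock (((m:ℝ)-1)/2) j * pock (((m:ℝ)-1)/2) (k-j) := by
  have h := geg_cos_expand m k 0
  rw [Real.cos_zero] at h
  rw [h]
  refine Finset.sum_congr rfl fun j hj => ?_
  rw [mul_zero, Real.cos_zero, mul_one]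

lemma geg_cos_abs_le (m k : ℕ) (hm : 1 ≤ m) (θ : ℝ) :
    |Geg m k (Real.cos θ)| ≤ Geg m k 1 := by
  have hlam : (0:ℝ) ≤ ((m:ℝ)-1)/2 := by
    have : (1:ℝ) ≤ (m:ℝ) := by exact_mod_cast hm
    linarith
  rw [geg_cos_expand m k θ, geg_one_eq]
  refine (Finset.abs_sum_le_sum_abs _ _).trans ?_
  refine Finset.sum_le_sum fun j hj => ?_
  rw [abs_mul, abs_mul]
  have h1 := pock_nonneg hlam j
  have h2 := pock_nonneg hlam (k-j)
  rw [abs_of_nonneg h1, abs_of_nonneg h2]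
  have := Real.abs_cos_le_one (((k:ℝ) - 2*j) * θ)
  calc pock (((m:ℝ)-1)/2) j * pock (((m:ℝ)-1)/2) (k-j) * |Real.cos (((k:ℝ) - 2*j) * θ)|
      ≤ pock (((m:ℝ)-1)/2) j * pock (((m:ℝ)-1)/2) (k-j) * 1 := by
        apply mul_le_mul_of_nonneg_left this (mul_nonneg h1 h2)
    _ = _ := by ring

lemma quad_factor {A B : Type*} [Fintype A] [Fintype B] (C : ℝ) (f : A → A → ℝ) (g : B → B → ℝ) :
    ∑ α : A, ∑ β : B, ∑ α' : A, ∑ β' : B, C * (f α α' * g β β')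
      = C * ((∑ α : A, ∑ α' : A, f α α') * (∑ β : B, ∑ β' : B, g β β')) := by
  symm
  rw [Finset.sum_mul_sum, Finset.mul_sum]
  refine Finset.sum_congr rfl fun α _ => ?_
  rw [Finset.mul_sum]
  refine Finset.sum_congr rfl fun β _ => ?_
  rw [Finset.sum_mul_sum, Finset.mul_sum]
  refine Finset.sum_congr rfl fun α' _ => ?_
  rw [Finset.mul_sum]

set_option maxHeartbeats 2000000 in
theorem parity_classes_unbounded_of_strictly_positive_definite
    (m M : ℕ) (hm : 2 ≤ m) (hM : 2 ≤ M)
    (a : ℕ → ℕ → ℝ) (ha : ∀ k l, 0 ≤ a k l)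
    (hsum : Summable fun kl : ℕ × ℕ => a kl.1 kl.2 * Geg m kl.1 1 * Geg M kl.2 1)
    (hspd : ∀ (n : ℕ) (x : Fin n → Sph m) (w : Fin n → Sph M),
      Function.Injective (fun μ => (x μ, w μ)) → ∀ c : Fin n → ℝ, c ≠ 0 →
        0 < ∑ μ : Fin n, ∑ ν : Fin n,
            c μ * c ν * Kr m M a (ip (x μ) (x ν)) (ip (w μ) (w ν))) :
    ∀ i j : ℕ, i < 2 → j < 2 → ∀ N : ℕ, ∃ k l : ℕ,
      0 < a k l ∧ k % 2 = i ∧ l % 2 = j ∧ N ≤ k ∧ N ≤ l := by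
  intro i j hi hj N
  by_contra hcon
  push_neg at hcon
  have hm1 : 1 ≤ m := by omega
  have hM1 : 1 ≤ M := by omega
  set s1 := N + (N + i) % 2 with hs1def
  set s2 := N + (N + j) % 2 with hs2def
  have hs1p : s1 % 2 = i := by omega
  have hs2p : s2 % 2 = j := by omega
  have hs1N : N ≤ s1 := by omega
  have hs2N : N ≤ s2 := by omega
  set L1 := 2 * s1 + 2 with hL1def
  set L2 := 2 * s2 + 2 with hL2def
  have hL1p : 0 < L1 := by omega
  have hL2p : 0 < L2 := by omega
  set n := L1 * L2 with hndef
  set e : Fin L1 × Fin L2 ≃ Fin n := finProdFinEquiv with hedef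
  set x : Fin n → Sph m :=
    fun idx => sphPt m hm1 (2*π*(((e.symm idx).1 : ℕ):ℝ)/L1) with hxdef
  set w : Fin n → Sph M :=
    fun idx => sphPt M hM1 (2*π*(((e.symm idx).2 : ℕ):ℝ)/L2) with hwdef
  set c : Fin n → ℝ :=
    fun idx => dd s1 L1 ((e.symm idx).1 : ℕ) * dd s2 L2 ((e.symm idx).2 : ℕ) with hcdef
  have hipx : ∀ μ ν : Fin n, ip (x μ) (x ν)
      = Real.cos (2*π*(((e.symm μ).1 : ℕ):ℝ)/L1 - 2*π*(((e.symm ν).1 : ℕ):ℝ)/L1) := by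
    intro μ ν
    rw [hxdef]
    exact ip_sphPt m hm1 _ _
  have hipw : ∀ μ ν : Fin n, ip (w μ) (w ν)
      = Real.cos (2*π*(((e.symm μ).2 : ℕ):ℝ)/L2 - 2*π*(((e.symm ν).2 : ℕ):ℝ)/L2) := by
    intro μ ν
    rw [hwdef]
    exact ip_sphPt M hM1 _ _
  have hinj : Function.Injective (fun μ => (x μ, w μ)) := by
    intro μ ν h
    rw [Prod.mk.injEq] at h
    have e1 : ((e.symm μ).1 : ℕ) = ((e.symm ν).1 : ℕ) := by
      apply sphPt_inj m hm1 L1 hL1p (Fin.is_lt _) (Fin.is_lt _)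
      have := h.1
      rw [hxdef] at this
      exact this
    have e2 : ((e.symm μ).2 : ℕ) = ((e.symm ν).2 : ℕ) := by
      apply sphPt_inj M hM1 L2 hL2p (Fin.is_lt _) (Fin.is_lt _)
      have := h.2
      rw [hwdef] at this
      exact this
    have : e.symm μ = e.symm ν := Prod.ext (Fin.ext e1) (Fin.ext e2)
    exact e.symm.injective this
  have hc0 : c ≠ 0 := by
    intro h
    have h0 := congrFun h (e (⟨0, hL1p⟩, ⟨0, hL2p⟩))
    rw [hcdef] at h0
    simp only [Equiv.symm_apply_apply] at h0
    simp [dd] at h0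
  have hsummand : ∀ μ ν : Fin n, Summable (fun kl : ℕ × ℕ =>
      a kl.1 kl.2 * Geg m kl.1 (ip (x μ) (x ν)) * Geg M kl.2 (ip (w μ) (w ν))) := by
    intro μ ν
    refine Summable.of_norm_bounded hsum fun kl => ?_
    rw [Real.norm_eq_abs, hipx, hipw, abs_mul, abs_mul, abs_of_nonneg (ha _ _)]
    have b1 := geg_cos_abs_le m kl.1 hm1 (2*π*(((e.symm μ).1 : ℕ):ℝ)/L1 - 2*π*(((e.symm ν).1 : ℕ):ℝ)/L1)
    have b2 := geg_cos_abs_le M kl.2 hM1 (2*π*(((e.symm μ).2 : ℕ):ℝ)/L2 - 2*π*(((e.symm ν).2 : ℕ):ℝ)/L2)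
    have hb1 : 0 ≤ a kl.1 kl.2 * Geg m kl.1 1 :=
      mul_nonneg (ha _ _) (le_trans (abs_nonneg _) b1)
    exact mul_le_mul (mul_le_mul_of_nonneg_left b1 (ha _ _)) b2 (abs_nonneg _) hb1
  have hzero : ∀ kl : ℕ × ℕ, (∑ μ : Fin n, ∑ ν : Fin n, c μ * c ν *
      (a kl.1 kl.2 * Geg m kl.1 (ip (x μ) (x ν)) * Geg M kl.2 (ip (w μ) (w ν)))) = 0 := by
    rintro ⟨k, l⟩
    rcases (ha k l).eq_or_lt with haz | hpos
    · refine Finset.sum_eq_zero fun μ _ => Finset.sum_eq_zero fun ν _ => ?_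
      rw [← haz]
      ring
    · have hcase : (k % 2 ≠ s1 % 2 ∨ k < s1) ∨ (l % 2 ≠ s2 % 2 ∨ l < s2) := by
        by_cases h1 : k % 2 = i
        · by_cases h2 : l % 2 = j
          · by_cases h3 : N ≤ k
            · have h4 := hcon k l hpos h1 h2 h3
              exact Or.inr (Or.inr (by omega))
            · exact Or.inl (Or.inr (by omega))
          · exact Or.inr (Or.inl (by omega))
        · exact Or.inl (Or.inl (by omega))
      have hterm : ∀ μ ν : Fin n, c μ * c ν *
          (a k l * Geg m k (ip (x μ) (x ν)) * Geg M l (ip (w μ) (w ν)))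
          = a k l * ((dd s1 L1 ((e.symm μ).1 : ℕ) * dd s1 L1 ((e.symm ν).1 : ℕ) *
              Geg m k (Real.cos (2*π*(((e.symm μ).1 : ℕ):ℝ)/L1 - 2*π*(((e.symm ν).1 : ℕ):ℝ)/L1)))
            * (dd s2 L2 ((e.symm μ).2 : ℕ) * dd s2 L2 ((e.symm ν).2 : ℕ) *
              Geg M l (Real.cos (2*π*(((e.symm μ).2 : ℕ):ℝ)/L2 - 2*π*(((e.symm ν).2 : ℕ):ℝ)/L2)))) := by
        intro μ ν
        rw [hipx μ ν, hipw μ ν, hcdef]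
        ring
      rw [Finset.sum_congr rfl fun μ _ => Finset.sum_congr rfl fun ν _ => hterm μ ν]
      -- change variables from Fin n to Fin L1 × Fin L2
      have hchange : ∀ F : Fin n → ℝ, ∑ μ : Fin n, F μ = ∑ q : Fin L1 × Fin L2, F (e q) :=
        fun F => (Equiv.sum_comp e F).symm
      rw [hchange]
      rw [Finset.sum_congr rfl fun q _ => hchange _]
      simp only [Equiv.symm_apply_apply]
      rw [Fintype.sum_prod_type]
      rw [Finset.sum_congr rfl fun α _ => Finset.sum_congr rfl fun β _ => Fintype.sum_prod_type _]
      rw [quad_factor (a k l)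
        (fun α α' : Fin L1 => dd s1 L1 (α : ℕ) * dd s1 L1 (α' : ℕ) *
          Geg m k (Real.cos (2*π*((α : ℕ):ℝ)/L1 - 2*π*((α' : ℕ):ℝ)/L1)))
        (fun β β' : Fin L2 => dd s2 L2 (β : ℕ) * dd s2 L2 (β' : ℕ) *
          Geg M l (Real.cos (2*π*((β : ℕ):ℝ)/L2 - 2*π*((β' : ℕ):ℝ)/L2)))]
      rcases hcase with hF | hG
      · have hF0 : (∑ α : Fin L1, ∑ α' : Fin L1, dd s1 L1 (α : ℕ) * dd s1 L1 (α' : ℕ) *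
            Geg m k (Real.cos (2*π*((α : ℕ):ℝ)/L1 - 2*π*((α' : ℕ):ℝ)/L1))) = 0 := by
          rw [Fin.sum_univ_eq_sum_range (fun μ => ∑ α' : Fin L1, dd s1 L1 μ * dd s1 L1 (α' : ℕ) *
            Geg m k (Real.cos (2*π*(μ:ℝ)/L1 - 2*π*((α' : ℕ):ℝ)/L1))) L1]
          rw [Finset.sum_congr rfl fun μ _ => Fin.sum_univ_eq_sum_range (fun ν => dd s1 L1 μ * dd s1 L1 ν *
            Geg m k (Real.cos (2*π*(μ:ℝ)/L1 - 2*π*(ν:ℝ)/L1))) L1]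
          exact Fsum_zero' m s1 k L1 hL1def hF
        rw [hF0, zero_mul, mul_zero]
      · have hG0 : (∑ β : Fin L2, ∑ β' : Fin L2, dd s2 L2 (β : ℕ) * dd s2 L2 (β' : ℕ) *
            Geg M l (Real.cos (2*π*((β : ℕ):ℝ)/L2 - 2*π*((β' : ℕ):ℝ)/L2))) = 0 := by
          rw [Fin.sum_univ_eq_sum_range (fun μ => ∑ β' : Fin L2, dd s2 L2 μ * dd s2 L2 (β' : ℕ) *
            Geg M l (Real.cos (2*π*(μ:ℝ)/L2 - 2*π*((β' : ℕ):ℝ)/L2))) L2]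
          rw [Finset.sum_congr rfl fun μ _ => Fin.sum_univ_eq_sum_range (fun ν => dd s2 L2 μ * dd s2 L2 ν *
            Geg M l (Real.cos (2*π*(μ:ℝ)/L2 - 2*π*(ν:ℝ)/L2))) L2]
          exact Fsum_zero' M s2 l L2 hL2def hG
        rw [hG0, mul_zero, mul_zero]
  have hform : (∑ μ : Fin n, ∑ ν : Fin n,
      c μ * c ν * Kr m M a (ip (x μ) (x ν)) (ip (w μ) (w ν))) = 0 := by
    have hstep1 : ∀ μ ν : Fin n, c μ * c ν * Kr m M a (ip (x μ) (x ν)) (ip (w μ) (w ν))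
        = ∑' kl : ℕ × ℕ, c μ * c ν *
            (a kl.1 kl.2 * Geg m kl.1 (ip (x μ) (x ν)) * Geg M kl.2 (ip (w μ) (w ν))) := by
      intro μ ν
      rw [Kr, tsum_mul_left]
    rw [Finset.sum_congr rfl fun μ _ => Finset.sum_congr rfl fun ν _ => hstep1 μ ν]
    rw [← Fintype.sum_prod_type (f := fun p : Fin n × Fin n => ∑' kl : ℕ × ℕ, c p.1 * c p.2 *
      (a kl.1 kl.2 * Geg m kl.1 (ip (x p.1) (x p.2)) * Geg M kl.2 (ip (w p.1) (w p.2))))]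
    rw [← Summable.tsum_finsetSum (fun p _ => Summable.mul_left (c p.1 * c p.2) (hsummand p.1 p.2))]
    rw [tsum_congr (fun kl => ?_), tsum_zero]
    have h := hzero kl
    rw [Fintype.sum_prod_type]
    convert h using 2 with μ
  have hs := hspd n x w hinj c hc0
  rw [hform] at hs
  exact lt_irrefl 0 hs
end
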